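/- Suppose r_n → ∞ as n → ∞ (with 0 < 2r_n < n). Then there exists a constant K > 0 such that, for every n ≥ 3 and every j with 1 ≤ j ≤ ⌊n/2⌋, one has |(2r_n)²/(n² β^n_j) − 6/(π² j²)| ≤ K/(r_n j²) + K r_n²/n². -/

import Mathlib

/-!
With `x = πj/n` one has `β^n_j = (2/r) S` where `S = ∑_{m=1}^r sin² (m x)`, so the quantity
to bound is `n⁻² (2r³/S - 6/x²)`. If `r x ≤ 1/2`, the Taylor bounds `t² - t⁴/3 ≤ sin² t ≤ t²`
give `S = r³x²/3 + O(r²x² + r⁵x⁴)`, hence `2r³/S - 6/x² = O(1/(r x²) + r²)`. If `r x ≥ 1/2`,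
then `S ≥ r/90` (Jordan's inequality `sin t ≥ 2t/π` on the first `r` or `⌊r/2⌋` terms while
`r x < π`, the Dirichlet kernel bound `S ≥ r/2 - 1/(2 sin x)` beyond), so both `2r³/S` and
`6/x²` are `O(r²)`.
-/

open MeasureTheory ProbabilityTheory Real Filter Topology

noncomputable section

/-- The eigenvalues `α^n_j` of the interaction Hamiltonian. -/
def alpha (n r j : ℕ) : ℝ :=
  (1 / (r : ℝ)) * ∑ m ∈ Finset.Icc 1 r, Real.cos (2 * j * m * π / n)

/-- `β^n_j = 1 - α^n_j`. -/
def beta (n r j : ℕ) : ℝ := 1 - alpha n r j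

def sinSqSum (r : ℕ) (x : ℝ) : ℝ := ∑ m ∈ Finset.Icc 1 r, sin (m * x) ^ 2

lemma sum_Icc_sq (r : ℕ) :
    ∑ m ∈ Finset.Icc 1 r, (m : ℝ) ^ 2 = r * (r + 1) * (2 * r + 1) / 6 := by
  induction r with
  | zero => simp
  | succ r ih =>
    rw [Finset.sum_Icc_succ_top (by omega), ih]
    push_cast
    ring

lemma sum_cos_two_mul_mul_two_sin (r : ℕ) (x : ℝ) :
    (∑ m ∈ Finset.Icc 1 r, cos (2 * m * x)) * (2 * sin x) = sin ((2 * r + 1) * x) - sin x := by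
  induction r with
  | zero => simp
  | succ r ih =>
    rw [Finset.sum_Icc_succ_top (by omega), add_mul, ih]
    have h := sin_sub_sin ((2 * (r + 1) + 1) * x) ((2 * r + 1) * x)
    rw [show ((2 * (r + 1) + 1) * x - (2 * r + 1) * x) / 2 = x by ring,
      show ((2 * (r + 1) + 1) * x + (2 * r + 1) * x) / 2 = 2 * (r + 1) * x by ring] at h
    push_cast
    linarith

lemma sinSqSum_eq (r : ℕ) (x : ℝ) :
    sinSqSum r x = r / 2 - (∑ m ∈ Finset.Icc 1 r, cos (2 * m * x)) / 2 := by
  simp only [sinSqSum, sin_sq_eq_half_sub, ← mul_assoc, Finset.sum_sub_distrib, Finset.sum_const,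
    Nat.card_Icc, add_tsub_cancel_right, ← Finset.sum_div, nsmul_eq_mul, one_div]
  ring

lemma sq_sub_pow_four_div_three_le_sin_sq (t : ℝ) : t ^ 2 - t ^ 4 / 3 ≤ sin t ^ 2 := by
  wlog ht : 0 ≤ t generalizing t
  · have h := this (-t) (by linarith)
    rwa [sin_neg, neg_sq, neg_sq, (by decide : Even 4).neg_pow] at h
  rcases le_or_gt t 2 with ht2 | ht2
  · have h := sin_ge_sub_cube ht
    have h0 : 0 ≤ t - t ^ 3 / 6 := by
      nlinarith [mul_le_mul_of_nonneg_left (show t ^ 2 ≤ 4 by nlinarith) ht]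
    nlinarith [pow_le_pow_left₀ h0 h 2, pow_nonneg ht 6]
  · have h3 : 3 ≤ t ^ 2 := by nlinarith
    nlinarith [mul_le_mul_of_nonneg_left h3 (sq_nonneg t), sq_nonneg (sin t)]

lemma sinSqSum_le (r : ℕ) (x : ℝ) : sinSqSum r x ≤ r * (r + 1) * (2 * r + 1) / 6 * x ^ 2 := by
  rw [← sum_Icc_sq, Finset.sum_mul]
  exact Finset.sum_le_sum fun m _ => by simpa [mul_pow] using sin_sq_le_sq (x := m * x)

lemma sub_le_sinSqSum (r : ℕ) (x : ℝ) :
    r * (r + 1) * (2 * r + 1) / 6 * x ^ 2 - r ^ 5 * x ^ 4 / 3 ≤ sinSqSum r x := by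
  have hquartic : ∑ m ∈ Finset.Icc 1 r, (m : ℝ) ^ 4 ≤ r ^ 5 := by
    calc ∑ m ∈ Finset.Icc 1 r, (m : ℝ) ^ 4 ≤ ∑ _m ∈ Finset.Icc 1 r, (r : ℝ) ^ 4 :=
          Finset.sum_le_sum fun m hm => by gcongr; exact_mod_cast (Finset.mem_Icc.1 hm).2
      _ = r ^ 5 := by
        simp only [Finset.sum_const, Nat.card_Icc, add_tsub_cancel_right, nsmul_eq_mul]; ring
  calc r * (r + 1) * (2 * r + 1) / 6 * x ^ 2 - r ^ 5 * x ^ 4 / 3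
      ≤ (∑ m ∈ Finset.Icc 1 r, (m : ℝ) ^ 2) * x ^ 2
          - (∑ m ∈ Finset.Icc 1 r, (m : ℝ) ^ 4) * x ^ 4 / 3 := by
        rw [sum_Icc_sq]; gcongr
    _ = ∑ m ∈ Finset.Icc 1 r, ((m * x) ^ 2 - (m * x) ^ 4 / 3) := by
        rw [Finset.sum_sub_distrib, Finset.sum_mul, Finset.sum_mul, Finset.sum_div]
        simp only [mul_pow]
    _ ≤ sinSqSum r x := Finset.sum_le_sum fun m _ => sq_sub_pow_four_div_three_le_sin_sq _

lemma sinSqSum_mono {x : ℝ} : Monotone (sinSqSum · x) := fun _ _ h =>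
  Finset.sum_le_sum_of_subset_of_nonneg (Finset.Icc_subset_Icc le_rfl h) fun _ _ _ => sq_nonneg _

lemma mul_cube_le_sinSqSum {M : ℕ} {x : ℝ} (hx : 0 ≤ x) (hM : M * x ≤ π / 2) :
    2 / 15 * M ^ 3 * x ^ 2 ≤ sinSqSum M x := by
  have hjordan : ∀ m ∈ Finset.Icc 1 M, 4 / π ^ 2 * (m ^ 2 * x ^ 2) ≤ sin (m * x) ^ 2 := by
    intro m hm
    have hmM : (m : ℝ) ≤ M := by exact_mod_cast (Finset.mem_Icc.1 hm).2
    have h := mul_le_sin (by positivity) ((mul_le_mul_of_nonneg_right hmM hx).trans hM)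
    calc 4 / π ^ 2 * (m ^ 2 * x ^ 2) = (2 / π * (m * x)) ^ 2 := by ring
      _ ≤ sin (m * x) ^ 2 := by gcongr
  have hpi : 2 / 5 ≤ 4 / π ^ 2 := by
    rw [div_le_div_iff₀ (by norm_num) (by positivity)]; nlinarith [pi_lt_d2, pi_pos]
  calc 2 / 15 * M ^ 3 * x ^ 2 ≤ 4 / π ^ 2 * (M * (M + 1) * (2 * M + 1) / 6 * x ^ 2) := by
        have : (M : ℝ) ^ 3 / 3 ≤ M * (M + 1) * (2 * M + 1) / 6 := by
          nlinarith [sq_nonneg (M : ℝ), M.cast_nonneg (α := ℝ)]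
        nlinarith [mul_le_mul hpi this (by positivity) (by positivity), sq_nonneg x]
    _ = ∑ m ∈ Finset.Icc 1 M, 4 / π ^ 2 * (m ^ 2 * x ^ 2) := by
        rw [← Finset.mul_sum, ← Finset.sum_mul, sum_Icc_sq]
    _ ≤ sinSqSum M x := Finset.sum_le_sum hjordan

lemma sinSqSum_pos {r : ℕ} (hr : 1 ≤ r) {x : ℝ} (hx0 : 0 < x) (hx : x ≤ π / 2) :
    0 < sinSqSum r x := by
  have h := mul_cube_le_sinSqSum (M := 1) hx0.le (by simpa using hx)
  exact lt_of_lt_of_le (by positivity) (h.trans (sinSqSum_mono hr))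

lemma half_sub_le_sinSqSum (r : ℕ) {x : ℝ} (hx0 : 0 < x) (hx : x ≤ π / 2) :
    r / 2 - π / (4 * x) ≤ sinSqSum r x := by
  have hsin : 2 / π * x ≤ sin x := mul_le_sin hx0.le hx
  have hsin0 : 0 < sin x := lt_of_lt_of_le (by positivity) hsin
  rw [div_mul_eq_mul_div, div_le_iff₀ pi_pos] at hsin
  have hcos : ∑ m ∈ Finset.Icc 1 r, cos (2 * m * x) ≤ π / (2 * x) := by
    have h := sum_cos_two_mul_mul_two_sin r x
    rw [le_div_iff₀ (by positivity)]
    nlinarith [sin_le_one ((2 * r + 1) * x), neg_one_le_sin x]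
  rw [sinSqSum_eq, show π / (4 * x) = π / (2 * x) / 2 by field_simp; ring]
  linarith

lemma div_ninety_le_sinSqSum {r : ℕ} {x : ℝ} (hx0 : 0 < x) (hx : x ≤ π / 2)
    (hrx : 1 / 2 ≤ r * x) :
    r / 90 ≤ sinSqSum r x := by
  rcases le_or_gt (r * x) (π / 2) with h | h
  · have := mul_cube_le_sinSqSum hx0.le h
    nlinarith [mul_le_mul hrx hrx (by norm_num) (by positivity)]
  rcases lt_or_ge (r * x) π with h' | h'
  · have hr2 : 2 ≤ r := by
      by_contra! hr1
      interval_cases r <;> simp at h <;> linarith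
    have hM : ((r / 2 : ℕ) : ℝ) * x ≤ π / 2 := by
      have : ((r / 2 : ℕ) : ℝ) ≤ r / 2 := Nat.cast_div_le
      nlinarith
    have hM3 : (r : ℝ) / 3 ≤ (r / 2 : ℕ) := by
      rw [div_le_iff₀ (by norm_num)]; exact_mod_cast (by omega : r ≤ r / 2 * 3)
    have hrx2 : 9 / 4 ≤ (r * x) ^ 2 := by nlinarith [pi_gt_three]
    calc (r : ℝ) / 90 ≤ 2 / 15 * (r / 27 * (r * x) ^ 2) := by nlinarith
      _ = 2 / 15 * (r / 3) ^ 3 * x ^ 2 := by ring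
      _ ≤ 2 / 15 * ((r / 2 : ℕ) : ℝ) ^ 3 * x ^ 2 := by gcongr
      _ ≤ sinSqSum r x :=
        (mul_cube_le_sinSqSum hx0.le hM).trans (sinSqSum_mono (Nat.div_le_self r 2))
  · have := half_sub_le_sinSqSum r hx0 hx
    have : π / (4 * x) ≤ r / 4 := by
      rw [div_le_div_iff₀ (by positivity) (by norm_num)]; linarith
    linarith

lemma abs_two_mul_cube_div_sinSqSum_sub_le_of_mul_le_half {r : ℕ} (hr : 1 ≤ r) {x : ℝ}
    (hx0 : 0 < x) (hrx : r * x ≤ 1 / 2) :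
    |2 * r ^ 3 / sinSqSum r x - 6 / x ^ 2| ≤ 16 / (r * x ^ 2) + 8 * r ^ 2 := by
  have hr1 : (1 : ℝ) ≤ r := by exact_mod_cast hr
  have hup := sinSqSum_le r x
  have hlow := sub_le_sinSqSum r x
  have hrx2 : (r : ℝ) ^ 2 * x ^ 2 ≤ 1 / 4 := by
    nlinarith [mul_le_mul hrx hrx (by positivity) (by norm_num)]
  have hS : r ^ 3 * x ^ 2 / 4 ≤ sinSqSum r x := by
    nlinarith [mul_le_mul_of_nonneg_left hrx2 (by positivity : (0 : ℝ) ≤ r ^ 3 * x ^ 2)]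
  have hS0 : 0 < sinSqSum r x := lt_of_lt_of_le (by positivity) hS
  have hnum :
      |2 * r ^ 3 * x ^ 2 - 6 * sinSqSum r x| ≤ 4 * r ^ 2 * x ^ 2 + 2 * r ^ 5 * x ^ 4 := by
    rw [abs_le]; constructor <;> nlinarith [sq_nonneg x]
  calc |2 * r ^ 3 / sinSqSum r x - 6 / x ^ 2|
      = |2 * r ^ 3 * x ^ 2 - 6 * sinSqSum r x| / (sinSqSum r x * x ^ 2) := by
        rw [← abs_of_pos (by positivity : 0 < sinSqSum r x * x ^ 2), ← abs_div]
        congr 1; field_simp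
    _ ≤ (4 * r ^ 2 * x ^ 2 + 2 * r ^ 5 * x ^ 4) / (r ^ 3 * x ^ 2 / 4 * x ^ 2) := by
        gcongr
    _ = 16 / (r * x ^ 2) + 8 * r ^ 2 := by field_simp; ring

lemma abs_two_mul_cube_div_sinSqSum_sub_le_of_half_le_mul {r : ℕ} {x : ℝ} (hx0 : 0 < x)
    (hx : x ≤ π / 2) (hrx : 1 / 2 ≤ r * x) :
    |2 * r ^ 3 / sinSqSum r x - 6 / x ^ 2| ≤ 204 * (r : ℝ) ^ 2 := by
  have hS := div_ninety_le_sinSqSum hx0 hx hrx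
  have hr : (0 : ℝ) < r := by
    by_contra! h; nlinarith
  have hS0 : 0 < sinSqSum r x := lt_of_lt_of_le (by positivity) hS
  have h1 : 2 * r ^ 3 / sinSqSum r x ≤ 180 * r ^ 2 := by
    rw [div_le_iff₀ hS0]
    nlinarith [mul_le_mul_of_nonneg_left hS (by positivity : (0 : ℝ) ≤ 180 * r ^ 2)]
  have h2 : 6 / x ^ 2 ≤ 24 * r ^ 2 := by
    rw [div_le_iff₀ (by positivity)]; nlinarith [mul_le_mul hrx hrx (by norm_num) (by positivity)]
  exact abs_sub_le_of_nonneg_of_le (by positivity) (by nlinarith) (by positivity) (by nlinarith)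

lemma abs_two_mul_cube_div_sinSqSum_sub_le {r : ℕ} (hr : 1 ≤ r) {x : ℝ} (hx0 : 0 < x)
    (hx : x ≤ π / 2) :
    |2 * r ^ 3 / sinSqSum r x - 6 / x ^ 2| ≤ 204 / (r * x ^ 2) + 204 * r ^ 2 := by
  rcases le_total (r * x) (1 / 2) with h | h
  · refine (abs_two_mul_cube_div_sinSqSum_sub_le_of_mul_le_half hr hx0 h).trans ?_
    gcongr <;> norm_num
  · refine (abs_two_mul_cube_div_sinSqSum_sub_le_of_half_le_mul hx0 hx h).trans ?_
    have : 0 ≤ 204 / (r * x ^ 2) := by positivity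
    linarith

lemma beta_eq_sinSqSum (n j : ℕ) {r : ℕ} (hr : r ≠ 0) :
    beta n r j = 2 * sinSqSum r (π * j / n) / r := by
  have hsum : ∑ m ∈ Finset.Icc 1 r, cos (2 * j * m * π / n)
      = ∑ m ∈ Finset.Icc 1 r, cos (2 * m * (π * j / n)) :=
    Finset.sum_congr rfl fun m _ => by ring_nf
  rw [_root_.beta, alpha, hsum, sinSqSum_eq]
  generalize ∑ m ∈ Finset.Icc 1 r, cos (2 * m * (π * j / n)) = C
  field_simp

theorem eigenvalue_asymptotics_general
    (r : ℕ → ℕ) (hrn : ∀ n, 3 ≤ n → 0 < 2 * r n ∧ 2 * r n < n) :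
    ∃ K : ℝ, 0 < K ∧ ∀ n : ℕ, 3 ≤ n → ∀ j : ℕ, 1 ≤ j → j ≤ n / 2 →
      |(2 * (r n : ℝ)) ^ 2 / ((n : ℝ) ^ 2 * beta n (r n) j) - 6 / (π ^ 2 * (j : ℝ) ^ 2)|
        ≤ K / ((r n : ℝ) * (j : ℝ) ^ 2) + K * (r n : ℝ) ^ 2 / (n : ℝ) ^ 2 := by
  refine ⟨204, by norm_num, fun n hn j hj hjn => ?_⟩
  have hr : 1 ≤ r n := by have := hrn n hn; omega
  have hn0 : (0 : ℝ) < n := by positivity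
  have hj0 : (0 : ℝ) < j := by positivity
  have hjn' : 2 * (j : ℝ) ≤ n := by exact_mod_cast (by omega : 2 * j ≤ n)
  set x := π * j / n with hx
  have hx0 : 0 < x := by positivity
  have hxπ : x ≤ π / 2 := by
    rw [hx, div_le_div_iff₀ hn0 two_pos]; nlinarith [pi_pos]
  have hS0 : 0 < sinSqSum (r n) x := sinSqSum_pos hr hx0 hxπ
  have hsplit : (2 * (r n : ℝ)) ^ 2 / ((n : ℝ) ^ 2 * (2 * sinSqSum (r n) x / r n))
      - 6 / (π ^ 2 * (j : ℝ) ^ 2)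
      = (2 * (r n : ℝ) ^ 3 / sinSqSum (r n) x - 6 / x ^ 2) / n ^ 2 := by
    rw [sub_div, hx]; field_simp
  rw [beta_eq_sinSqSum n j (by omega), hsplit, abs_div,
    abs_of_pos (by positivity : (0 : ℝ) < (n : ℝ) ^ 2)]
  calc |2 * (r n : ℝ) ^ 3 / sinSqSum (r n) x - 6 / x ^ 2| / (n : ℝ) ^ 2
      ≤ (204 / (r n * x ^ 2) + 204 * (r n : ℝ) ^ 2) / (n : ℝ) ^ 2 := by
        gcongr; exact abs_two_mul_cube_div_sinSqSum_sub_le hr hx0 hxπ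
    _ = 204 / π ^ 2 / ((r n : ℝ) * (j : ℝ) ^ 2) + 204 * (r n : ℝ) ^ 2 / (n : ℝ) ^ 2 := by
        rw [hx]; field_simp
    _ ≤ 204 / ((r n : ℝ) * (j : ℝ) ^ 2) + 204 * (r n : ℝ) ^ 2 / (n : ℝ) ^ 2 := by
        gcongr
        exact div_le_self (by norm_num) (by nlinarith [pi_gt_three])

/-- **Lemma (asymptotics of the eigenvalues).** If `r_n → ∞`, there is a constant `K > 0`
such that for every `n ≥ 3` and every `1 ≤ j ≤ ⌊n/2⌋`,
`|(2r_n)²/(n² β^n_j) − 6/(π² j²)| ≤ K/(r_n j²) + K r_n²/n²`. -/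
theorem eigenvalue_asymptotics
    (r : ℕ → ℕ) (hrn : ∀ n, 3 ≤ n → 0 < 2 * r n ∧ 2 * r n < n)
    (hr : Tendsto r atTop atTop) :
    ∃ K : ℝ, 0 < K ∧ ∀ n : ℕ, 3 ≤ n → ∀ j : ℕ, 1 ≤ j → j ≤ n / 2 →
      |(2 * (r n : ℝ)) ^ 2 / ((n : ℝ) ^ 2 * beta n (r n) j) - 6 / (π ^ 2 * (j : ℝ) ^ 2)|
        ≤ K / ((r n : ℝ) * (j : ℝ) ^ 2) + K * (r n : ℝ) ^ 2 / (n : ℝ) ^ 2 :=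
  eigenvalue_asymptotics_general r hrn

end
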